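/- There exists N₀ such that for all N ≥ N₀, the threshold sequence satisfies t_i^{(N)} > 1 for i = ⌈√N + 1⌉; consequently, for N ≥ N₀ the greatest index i with t_i^{(N)} < 1 is strictly less than √N + 1. -/
import Mathlib

set_option maxRecDepth 8000
set_option maxHeartbeats 1000000

open Filter Real

/-- Auxiliary backwards recurrence: `tAux N n` equals `t_{N-1-n}^{(N)}`, where
`t_{N-1} = N/2` and `t_{i-1} = (s_i²(s_i+1) + 2(i² − s_i²) t_i) / (2 i (i+1))`
with `s_i = ⌊t_i⌋`. -/
noncomputable def tAux (N : ℕ) : ℕ → ℝ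
  | 0 => (N : ℝ) / 2
  | n + 1 =>
      let i : ℝ := (N : ℝ) - 1 - (n : ℝ)
      let t : ℝ := tAux N n
      let s : ℝ := (⌊t⌋ : ℝ)
      (s ^ 2 * (s + 1) + 2 * (i ^ 2 - s ^ 2) * t) / (2 * i * (i + 1))

/-- The equilibrium threshold sequence `t_i^{(N)}` of the two-sided secretary game,
for `0 ≤ i ≤ N-1`. -/
noncomputable def tgame (N i : ℕ) : ℝ := tAux N (N - 1 - i)

private lemma sq_le_aux {a b : ℝ} (ha : 0 ≤ a) (hb : 0 ≤ b) (h : a^2 ≤ b^2) : a ≤ b := by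
  by_contra hc
  push_neg at hc
  nlinarith

private lemma poly_key (i x : ℝ) (hx : 2 ≤ x) (hxi : x ≤ i) :
    4*i^2*(i^2-1)^2*x^6*(x^2+2) ≤ (x^4+3*x^2+4)*(2*i^3*x^2 - i^3 + x*(i-x)^2)^2 := by
  have hp : (0:ℝ) ≤ i - x := by linarith
  have hq : (0:ℝ) ≤ x - 2 := by linarith
  linarith [pow_nonneg hq 1,
    pow_nonneg hq 2,
    pow_nonneg hq 3,
    pow_nonneg hq 4,
    pow_nonneg hq 5,
    pow_nonneg hq 6,
    pow_nonneg hq 7,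
    pow_nonneg hq 8,
    pow_nonneg hq 9,
    pow_nonneg hq 10,
    pow_nonneg hq 11,
    pow_nonneg hq 12,
    pow_nonneg hp 1,
    mul_nonneg (pow_nonneg hp 1) (pow_nonneg hq 1),
    mul_nonneg (pow_nonneg hp 1) (pow_nonneg hq 2),
    mul_nonneg (pow_nonneg hp 1) (pow_nonneg hq 3),
    mul_nonneg (pow_nonneg hp 1) (pow_nonneg hq 4),
    mul_nonneg (pow_nonneg hp 1) (pow_nonneg hq 5),
    mul_nonneg (pow_nonneg hp 1) (pow_nonneg hq 6),
    mul_nonneg (pow_nonneg hp 1) (pow_nonneg hq 7),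
    mul_nonneg (pow_nonneg hp 1) (pow_nonneg hq 8),
    mul_nonneg (pow_nonneg hp 1) (pow_nonneg hq 9),
    mul_nonneg (pow_nonneg hp 1) (pow_nonneg hq 10),
    mul_nonneg (pow_nonneg hp 1) (pow_nonneg hq 11),
    pow_nonneg hp 2,
    mul_nonneg (pow_nonneg hp 2) (pow_nonneg hq 1),
    mul_nonneg (pow_nonneg hp 2) (pow_nonneg hq 2),
    mul_nonneg (pow_nonneg hp 2) (pow_nonneg hq 3),
    mul_nonneg (pow_nonneg hp 2) (pow_nonneg hq 4),
    mul_nonneg (pow_nonneg hp 2) (pow_nonneg hq 5),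
    mul_nonneg (pow_nonneg hp 2) (pow_nonneg hq 6),
    mul_nonneg (pow_nonneg hp 2) (pow_nonneg hq 7),
    mul_nonneg (pow_nonneg hp 2) (pow_nonneg hq 8),
    mul_nonneg (pow_nonneg hp 2) (pow_nonneg hq 9),
    mul_nonneg (pow_nonneg hp 2) (pow_nonneg hq 10),
    pow_nonneg hp 3,
    mul_nonneg (pow_nonneg hp 3) (pow_nonneg hq 1),
    mul_nonneg (pow_nonneg hp 3) (pow_nonneg hq 2),
    mul_nonneg (pow_nonneg hp 3) (pow_nonneg hq 3),
    mul_nonneg (pow_nonneg hp 3) (pow_nonneg hq 4),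
    mul_nonneg (pow_nonneg hp 3) (pow_nonneg hq 5),
    mul_nonneg (pow_nonneg hp 3) (pow_nonneg hq 6),
    mul_nonneg (pow_nonneg hp 3) (pow_nonneg hq 7),
    mul_nonneg (pow_nonneg hp 3) (pow_nonneg hq 8),
    mul_nonneg (pow_nonneg hp 3) (pow_nonneg hq 9),
    pow_nonneg hp 4,
    mul_nonneg (pow_nonneg hp 4) (pow_nonneg hq 1),
    mul_nonneg (pow_nonneg hp 4) (pow_nonneg hq 2),
    mul_nonneg (pow_nonneg hp 4) (pow_nonneg hq 3),
    mul_nonneg (pow_nonneg hp 4) (pow_nonneg hq 4),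
    mul_nonneg (pow_nonneg hp 4) (pow_nonneg hq 5),
    mul_nonneg (pow_nonneg hp 4) (pow_nonneg hq 6),
    mul_nonneg (pow_nonneg hp 4) (pow_nonneg hq 7),
    mul_nonneg (pow_nonneg hp 4) (pow_nonneg hq 8),
    pow_nonneg hp 5,
    mul_nonneg (pow_nonneg hp 5) (pow_nonneg hq 1),
    mul_nonneg (pow_nonneg hp 5) (pow_nonneg hq 2),
    mul_nonneg (pow_nonneg hp 5) (pow_nonneg hq 3),
    mul_nonneg (pow_nonneg hp 5) (pow_nonneg hq 4),
    mul_nonneg (pow_nonneg hp 5) (pow_nonneg hq 5),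
    mul_nonneg (pow_nonneg hp 5) (pow_nonneg hq 6),
    mul_nonneg (pow_nonneg hp 5) (pow_nonneg hq 7),
    pow_nonneg hp 6,
    mul_nonneg (pow_nonneg hp 6) (pow_nonneg hq 1),
    mul_nonneg (pow_nonneg hp 6) (pow_nonneg hq 2),
    mul_nonneg (pow_nonneg hp 6) (pow_nonneg hq 3),
    mul_nonneg (pow_nonneg hp 6) (pow_nonneg hq 4)]

/-- One-step estimate for the recurrence. -/
private lemma step_main (i t x y : ℝ) (hi : 3 ≤ i)
    (hx2 : 2 ≤ x) (hxi : x ≤ i)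
    (hy0 : 0 ≤ y) (hy2 : x^2 + 1 + 2/(x^2+2) ≤ y^2)
    (ht1 : i/x ≤ t) (ht2 : t ≤ (i+1)/2) :
    (i-1)/y ≤ (((⌊t⌋ : ℤ) : ℝ)^2*(((⌊t⌋ : ℤ) : ℝ)+1) + 2*(i^2 - ((⌊t⌋ : ℤ) : ℝ)^2)*t)/(2*i*(i+1)) ∧
    (((⌊t⌋ : ℤ) : ℝ)^2*(((⌊t⌋ : ℤ) : ℝ)+1) + 2*(i^2 - ((⌊t⌋ : ℤ) : ℝ)^2)*t)/(2*i*(i+1)) ≤ i/2 := by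
  have hx0 : (0:ℝ) < x := by linarith
  have hi0 : (0:ℝ) < i := by linarith
  have hL1 : (1:ℝ) ≤ i/x := (one_le_div hx0).mpr hxi
  have hL2 : i/x ≤ (i+1)/2 := by
    have h1 : i/x ≤ i/2 := div_le_div_of_nonneg_left hi0.le (by norm_num) hx2
    linarith
  have ht1' : (1:ℝ) ≤ t := le_trans hL1 ht1
  have hs1 : (1:ℝ) ≤ ((⌊t⌋ : ℤ) : ℝ) := by
    have h : (1:ℤ) ≤ ⌊t⌋ := Int.le_floor.mpr (by exact_mod_cast ht1')
    exact_mod_cast h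
  set s : ℝ := ((⌊t⌋ : ℤ) : ℝ) with hsdef
  have hs2 : s ≤ t := Int.floor_le t
  have hs3 : t < s + 1 := Int.lt_floor_add_one t
  have hts : t - 1 ≤ s := by linarith
  have hden : (0:ℝ) < 2*i*(i+1) := by positivity
  have hupper : (s^2*(s+1) + 2*(i^2 - s^2)*t)/(2*i*(i+1)) ≤ i/2 := by
    rw [div_le_iff₀ hden]
    have h1 : (0:ℝ) ≤ s^2 * (2*t - (s+1)) := by
      apply mul_nonneg (sq_nonneg s); linarith
    have h2 : (0:ℝ) ≤ i^2 * ((i+1) - 2*t) := by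
      apply mul_nonneg (sq_nonneg i); linarith
    nlinarith [h1, h2]
  refine ⟨?_, hupper⟩
  have hs0 : (0:ℝ) ≤ s := by linarith
  have hθ : (0:ℝ) ≤ t - s := by linarith
  -- Step A : eliminate the floor
  have hA : (2*i^2*t - t^3 + (t-1)^2)/(2*i*(i+1)) ≤ (s^2*(s+1) + 2*(i^2 - s^2)*t)/(2*i*(i+1)) := by
    apply (div_le_div_iff_of_pos_right hden).mpr
    have h1 : (0:ℝ) ≤ s^2*(t-s) := mul_nonneg (sq_nonneg s) hθ
    have h2 : (0:ℝ) ≤ s*(t-s)^2 := mul_nonneg hs0 (sq_nonneg _)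
    have h3 : (0:ℝ) ≤ (t-s)^3 := by positivity
    have h4 : (0:ℝ) ≤ (s-(t-1))*(s+(t-1)) := by
      apply mul_nonneg <;> linarith
    nlinarith [h1, h2, h3, h4]
  -- Step B : monotonicity of the smooth map
  have hB : (2*i^2*(i/x) - (i/x)^3 + (i/x-1)^2)/(2*i*(i+1)) ≤
      (2*i^2*t - t^3 + (t-1)^2)/(2*i*(i+1)) := by
    apply (div_le_div_iff_of_pos_right hden).mpr
    set L : ℝ := i/x with hLdef
    have hfac : (0:ℝ) ≤ 2*i^2 - (t^2+t*L+L^2) + t + L - 2 := by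
      nlinarith [mul_nonneg (by linarith : (0:ℝ) ≤ (i+1)/2 - t) (by linarith : (0:ℝ) ≤ (i+1)/2 - L),
        mul_nonneg (by linarith : (0:ℝ) ≤ (i+1)/2 - t) (by linarith : (0:ℝ) ≤ t - 1),
        mul_nonneg (by linarith : (0:ℝ) ≤ (i+1)/2 - L) (by linarith : (0:ℝ) ≤ L - 1)]
    nlinarith [mul_nonneg (by linarith : (0:ℝ) ≤ t - L) hfac]
  -- Step C : the core inequality
  have hC : (i-1)/y ≤ (2*i^2*(i/x) - (i/x)^3 + (i/x-1)^2)/(2*i*(i+1)) := by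
    have hx0' : x ≠ 0 := ne_of_gt hx0
    have hQpos : (0:ℝ) < 2*i^3*x^2 - i^3 + x*(i-x)^2 := by
      have h1 : (0:ℝ) < i^3*(2*x^2-1) := mul_pos (pow_pos hi0 3) (by nlinarith)
      nlinarith [h1, mul_nonneg hx0.le (sq_nonneg (i-x))]
    have hQrw : (2*i^2*(i/x) - (i/x)^3 + (i/x-1)^2)/(2*i*(i+1)) =
        (2*i^3*x^2 - i^3 + x*(i-x)^2)/(2*i*(i+1)*x^3) := by
      field_simp
    have hy2' : (0:ℝ) < x^2+1+2/(x^2+2) := by positivity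
    have hypos : (0:ℝ) < y := by
      rcases hy0.eq_or_lt with h | h
      · exfalso
        rw [← h] at hy2
        nlinarith
      · exact h
    rw [hQrw, div_le_div_iff₀ hypos (by positivity)]
    apply sq_le_aux (mul_nonneg (by linarith : (0:ℝ) ≤ i-1) (by positivity))
      (mul_nonneg hQpos.le hy0)
    have hyy : (x^4+3*x^2+4)/(x^2+2) ≤ y^2 := by
      have e : x^2+1+2/(x^2+2) = (x^4+3*x^2+4)/(x^2+2) := by
        field_simp
        ring
      rw [e] at hy2; exact hy2
    have hkey := poly_key i x hx2 hxi
    have h6 : 4*i^2*(i^2-1)^2*x^6 ≤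
        (2*i^3*x^2 - i^3 + x*(i-x)^2)^2 * ((x^4+3*x^2+4)/(x^2+2)) := by
      rw [mul_div_assoc', le_div_iff₀ (by positivity : (0:ℝ) < x^2+2)]
      nlinarith [hkey]
    have h7 : (2*i^3*x^2 - i^3 + x*(i-x)^2)^2 * ((x^4+3*x^2+4)/(x^2+2)) ≤
        (2*i^3*x^2 - i^3 + x*(i-x)^2)^2 * y^2 :=
      mul_le_mul_of_nonneg_left hyy (sq_nonneg _)
    calc ((i-1)*(2*i*(i+1)*x^3))^2 = 4*i^2*(i^2-1)^2*x^6 := by ring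
      _ ≤ (2*i^3*x^2 - i^3 + x*(i-x)^2)^2 * ((x^4+3*x^2+4)/(x^2+2)) := h6
      _ ≤ (2*i^3*x^2 - i^3 + x*(i-x)^2)^2 * y^2 := h7
      _ = ((2*i^3*x^2 - i^3 + x*(i-x)^2)*y)^2 := by ring
  exact le_trans hC (le_trans hB hA)

noncomputable def aSeq (N j : ℕ) : ℝ :=
  (N:ℝ) + 3 - (j:ℝ) + 2*(Real.log ((N:ℝ)+4-(j:ℝ)) - Real.log 5)

lemma aSeq_lb (N j : ℕ) (hj : (j:ℝ) ≤ (N:ℝ)-1) : (N:ℝ)+3-(j:ℝ) ≤ aSeq N j := by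
  have h := Real.log_le_log (by norm_num : (0:ℝ) < 5) (by linarith : (5:ℝ) ≤ (N:ℝ)+4-(j:ℝ))
  unfold aSeq
  linarith

lemma aSeq_ge4 (N j : ℕ) (hj : (j:ℝ) ≤ (N:ℝ)-1) : 4 ≤ aSeq N j :=
  le_trans (by linarith) (aSeq_lb N j hj)

lemma aSeq_ub (N j : ℕ) (hj : (j:ℝ) ≤ (N:ℝ)-1) :
    aSeq N j ≤ (N:ℝ)+3-(j:ℝ)+2*Real.log ((N:ℝ)+4) := by
  have h := Real.log_le_log (by linarith : (0:ℝ) < (N:ℝ)+4-(j:ℝ))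
    (by linarith : (N:ℝ)+4-(j:ℝ) ≤ (N:ℝ)+4)
  have h5 : (0:ℝ) ≤ Real.log 5 := Real.log_nonneg (by norm_num)
  unfold aSeq
  linarith

lemma aSeq_step (N j : ℕ) (hj : (j:ℝ)+1 ≤ (N:ℝ)-1) :
    aSeq N (j+1) + 1 + 2/(aSeq N (j+1)+2) ≤ aSeq N j := by
  have hb : (0:ℝ) < (N:ℝ)+3-(j:ℝ) := by linarith
  have hb1 : (0:ℝ) < (N:ℝ)+4-(j:ℝ) := by linarith
  have hlog : Real.log (((N:ℝ)+3-(j:ℝ))/((N:ℝ)+4-(j:ℝ))) ≤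
      ((N:ℝ)+3-(j:ℝ))/((N:ℝ)+4-(j:ℝ)) - 1 :=
    Real.log_le_sub_one_of_pos (by positivity)
  have hld : Real.log (((N:ℝ)+3-(j:ℝ))/((N:ℝ)+4-(j:ℝ))) =
      Real.log ((N:ℝ)+3-(j:ℝ)) - Real.log ((N:ℝ)+4-(j:ℝ)) :=
    Real.log_div (ne_of_gt hb) (ne_of_gt hb1)
  have hfrac : ((N:ℝ)+3-(j:ℝ))/((N:ℝ)+4-(j:ℝ)) - 1 = -(1/((N:ℝ)+4-(j:ℝ))) := by
    field_simp
    norm_num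
  have hgap : 1/((N:ℝ)+4-(j:ℝ)) ≤
      Real.log ((N:ℝ)+4-(j:ℝ)) - Real.log ((N:ℝ)+3-(j:ℝ)) := by
    rw [hld, hfrac] at hlog
    linarith
  have hcast : ((j+1:ℕ):ℝ) = (j:ℝ)+1 := by push_cast; ring
  have hAlb : (N:ℝ)+3-((j:ℝ)+1) ≤ aSeq N (j+1) := by
    have h := aSeq_lb N (j+1) (by rw [hcast]; linarith)
    rw [hcast] at h
    linarith
  have hfr2 : 2/(aSeq N (j+1)+2) ≤ 2/((N:ℝ)+4-(j:ℝ)) := by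
    apply div_le_div_of_nonneg_left (by norm_num) (by linarith) (by linarith)
  have hdiff : aSeq N j - aSeq N (j+1) =
      1 + 2*(Real.log ((N:ℝ)+4-(j:ℝ)) - Real.log ((N:ℝ)+4-((j:ℝ)+1))) := by
    unfold aSeq
    rw [hcast]
    ring
  have heq : (N:ℝ)+4-((j:ℝ)+1) = (N:ℝ)+3-(j:ℝ) := by ring
  rw [heq] at hdiff
  have hfr2' : 2/(aSeq N (j+1)+2) ≤ 2*(1/((N:ℝ)+4-(j:ℝ))) := by
    rw [show (2:ℝ)*(1/((N:ℝ)+4-(j:ℝ))) = 2/((N:ℝ)+4-(j:ℝ)) by ring]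
    exact hfr2
  linarith [hgap, hfr2', hdiff]

lemma log_bound (N : ℕ) (hN : 1000 ≤ N) : 2*Real.log ((N:ℝ)+4) ≤ 3*Real.sqrt N - 2 := by
  have hN' : (1000:ℝ) ≤ (N:ℝ) := by exact_mod_cast hN
  have hr0 : 0 ≤ Real.sqrt N := Real.sqrt_nonneg _
  have hr2 : (Real.sqrt N)^2 = (N:ℝ) := Real.sq_sqrt (by positivity)
  have hr31 : (31:ℝ) ≤ Real.sqrt N := by
    apply sq_le_aux (by norm_num) hr0
    rw [hr2]; nlinarith
  have hu0 : (0:ℝ) ≤ Real.sqrt ((N:ℝ)+4) := Real.sqrt_nonneg _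
  have hu2 : (Real.sqrt ((N:ℝ)+4))^2 = (N:ℝ)+4 := Real.sq_sqrt (by positivity)
  have hu2r : Real.sqrt ((N:ℝ)+4) ≤ 2*Real.sqrt N := by
    apply sq_le_aux hu0 (by linarith)
    rw [hu2]; nlinarith
  have hupos : (0:ℝ) < Real.sqrt ((N:ℝ)+4) := by nlinarith
  have hv0 : (0:ℝ) < Real.sqrt (Real.sqrt ((N:ℝ)+4)) := Real.sqrt_pos.mpr hupos
  have hv2 : (Real.sqrt (Real.sqrt ((N:ℝ)+4)))^2 = Real.sqrt ((N:ℝ)+4) := Real.sq_sqrt hu0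
  have hlogu : Real.log ((N:ℝ)+4) = 2 * Real.log (Real.sqrt ((N:ℝ)+4)) := by
    rw [Real.log_sqrt (by positivity)]; ring
  have hlogv : Real.log (Real.sqrt ((N:ℝ)+4)) = 2 * Real.log (Real.sqrt (Real.sqrt ((N:ℝ)+4))) := by
    rw [Real.log_sqrt hu0]; ring
  have hlv : Real.log (Real.sqrt (Real.sqrt ((N:ℝ)+4))) ≤ Real.sqrt (Real.sqrt ((N:ℝ)+4)) - 1 :=
    Real.log_le_sub_one_of_pos hv0
  have h8v : 8*Real.sqrt (Real.sqrt ((N:ℝ)+4)) ≤ 3*Real.sqrt N + 6 := by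
    apply sq_le_aux (by positivity) (by linarith)
    nlinarith [hv2, hu2r, hr31]
  calc 2*Real.log ((N:ℝ)+4) = 8 * Real.log (Real.sqrt (Real.sqrt ((N:ℝ)+4))) := by
        rw [hlogu, hlogv]; ring
    _ ≤ 8*Real.sqrt (Real.sqrt ((N:ℝ)+4)) - 8 := by linarith
    _ ≤ 3*Real.sqrt N - 2 := by linarith

lemma aSeq_lt_sq (N : ℕ) (hN : 1000 ≤ N) (j : ℕ) (hj1 : Real.sqrt N + 1 ≤ (j:ℝ))
    (hj2 : (j:ℝ) ≤ (N:ℝ)-1) : aSeq N j < (j:ℝ)^2 := by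
  have hub := aSeq_ub N j hj2
  have hlog := log_bound N hN
  have hr0 : 0 ≤ Real.sqrt N := Real.sqrt_nonneg _
  have hr2 : (Real.sqrt N)^2 = (N:ℝ) := Real.sq_sqrt (by positivity)
  have hjsq : ((N:ℝ)) + 2*Real.sqrt N + 1 ≤ (j:ℝ)^2 := by nlinarith
  nlinarith

/-- Unfolding lemma for `tAux`. -/
lemma tAux_succ (N n : ℕ) : tAux N (n+1) =
    (((⌊tAux N n⌋ : ℤ) : ℝ)^2*(((⌊tAux N n⌋ : ℤ) : ℝ)+1) +
      2*(((N:ℝ)-1-(n:ℝ))^2 - ((⌊tAux N n⌋ : ℤ) : ℝ)^2)*(tAux N n))/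
      (2*((N:ℝ)-1-(n:ℝ))*(((N:ℝ)-1-(n:ℝ))+1)) := rfl

lemma invariant (N : ℕ) (hN : 1000 ≤ N) :
    ∀ n : ℕ, n ≤ N - 1 - ⌈Real.sqrt N + 1⌉₊ →
      ((N - 1 - n : ℕ):ℝ) / Real.sqrt (aSeq N (N - 1 - n)) ≤ tAux N n ∧
      tAux N n ≤ ((N:ℝ) - (n:ℝ))/2 := by
  have hN' : (1000:ℝ) ≤ (N:ℝ) := by exact_mod_cast hN
  have hr0 : 0 ≤ Real.sqrt N := Real.sqrt_nonneg _
  have hr2 : (Real.sqrt N)^2 = (N:ℝ) := Real.sq_sqrt (by positivity)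
  have hr31 : (31:ℝ) ≤ Real.sqrt N := by
    apply sq_le_aux (by norm_num) hr0
    rw [hr2]; nlinarith
  have hrN2 : Real.sqrt N ≤ (N:ℝ)/2 := by
    apply sq_le_aux hr0 (by linarith)
    rw [hr2]; nlinarith
  have hceil_lb : Real.sqrt N + 1 ≤ (⌈Real.sqrt N + 1⌉₊ : ℝ) := Nat.le_ceil _
  have hceil_ub : (⌈Real.sqrt N + 1⌉₊ : ℝ) < Real.sqrt N + 2 := by
    have h := Nat.ceil_lt_add_one (by positivity : (0:ℝ) ≤ Real.sqrt N + 1)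
    linarith
  intro n
  induction n with
  | zero =>
    intro _
    have h0 : N - 1 - 0 = N - 1 := rfl
    have hcastN1 : ((N - 1 : ℕ):ℝ) = (N:ℝ) - 1 := by
      rw [Nat.cast_sub (by omega : 1 ≤ N)]; push_cast; ring
    have hj2 : ((N - 1 : ℕ):ℝ) ≤ (N:ℝ)-1 := by rw [hcastN1]
    have h4 : (4:ℝ) ≤ aSeq N (N-1) := aSeq_ge4 N _ hj2
    have hsq2 : (2:ℝ) ≤ Real.sqrt (aSeq N (N-1)) := by
      have h := Real.sqrt_le_sqrt h4
      rwa [show (4:ℝ) = 2^2 by norm_num, Real.sqrt_sq (by norm_num : (0:ℝ) ≤ 2)] at h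
    have htz : tAux N 0 = (N:ℝ)/2 := rfl
    constructor
    · rw [h0, htz]
      have hch : ((N - 1 : ℕ):ℝ) / Real.sqrt (aSeq N (N-1)) ≤ ((N - 1 : ℕ):ℝ)/2 :=
        div_le_div_of_nonneg_left (by positivity) (by norm_num) hsq2
      rw [hcastN1] at hch
      rw [hcastN1]
      linarith
    · rw [htz]; push_cast; linarith
  | succ n ih =>
    intro hn1
    have hn : n ≤ N - 1 - ⌈Real.sqrt N + 1⌉₊ := by omega
    obtain ⟨ih1, ih2⟩ := ih hn
    have hceilN : ⌈Real.sqrt N + 1⌉₊ + 3 ≤ N - 1 := by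
      have h2 : ((⌈Real.sqrt N + 1⌉₊ + 3 : ℕ) : ℝ) < ((N - 1 : ℕ) : ℝ) := by
        rw [Nat.cast_sub (by omega : 1 ≤ N)]; push_cast; linarith
      exact Nat.le_of_lt (by exact_mod_cast h2)
    have hkey1 : n + 1 + ⌈Real.sqrt N + 1⌉₊ ≤ N - 1 := by omega
    have hjge : ⌈Real.sqrt N + 1⌉₊ + 1 ≤ N - 1 - n := by omega
    have hjcast : ((N - 1 - n : ℕ):ℝ) = (N:ℝ) - 1 - (n:ℝ) := by
      rw [Nat.cast_sub (by omega : n ≤ N - 1), Nat.cast_sub (by omega : 1 ≤ N)]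
      push_cast; ring
    have hjcast1 : ((N - 1 - (n+1) : ℕ):ℝ) = (N:ℝ) - 1 - (n:ℝ) - 1 := by
      rw [Nat.cast_sub (by omega : n + 1 ≤ N - 1), Nat.cast_sub (by omega : 1 ≤ N)]
      push_cast; ring
    set j : ℕ := N - 1 - n with hjdef
    have hjreal_lb : Real.sqrt N + 2 ≤ (j:ℝ) := by
      have h2 : ((⌈Real.sqrt N + 1⌉₊ + 1 : ℕ):ℝ) ≤ (j:ℝ) := by exact_mod_cast hjge
      push_cast at h2
      linarith
    have hjreal_ub : (j:ℝ) ≤ (N:ℝ) - 1 := by rw [hjcast]; linarith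
    have haj4 : (4:ℝ) ≤ aSeq N j := aSeq_ge4 N j hjreal_ub
    have haj0 : (0:ℝ) ≤ aSeq N j := by linarith
    have hx2 : (2:ℝ) ≤ Real.sqrt (aSeq N j) := by
      have h := Real.sqrt_le_sqrt haj4
      rwa [show (4:ℝ) = 2^2 by norm_num, Real.sqrt_sq (by norm_num : (0:ℝ) ≤ 2)] at h
    have hxsq : (Real.sqrt (aSeq N j))^2 = aSeq N j := Real.sq_sqrt haj0
    have hxi : Real.sqrt (aSeq N j) ≤ (j:ℝ) := by
      have hlt := aSeq_lt_sq N hN j (by linarith) hjreal_ub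
      apply sq_le_aux (Real.sqrt_nonneg _) (by positivity)
      rw [hxsq]; linarith
    have hj1cast : ((N - 1 - (n+1) : ℕ):ℝ) = (j:ℝ) - 1 := by
      rw [hjcast1, hjcast]
    have hstep : aSeq N j + 1 + 2/(aSeq N j + 2) ≤ aSeq N (N - 1 - (n+1)) := by
      have hj1j : N - 1 - (n+1) + 1 = j := by omega
      have h := aSeq_step N (N - 1 - (n+1)) (by rw [hj1cast]; linarith)
      rw [hj1j] at h
      exact h
    have hay0 : (0:ℝ) ≤ aSeq N (N - 1 - (n+1)) := by
      have h := aSeq_ge4 N (N - 1 - (n+1)) (by rw [hj1cast]; linarith)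
      linarith
    have hysq : (Real.sqrt (aSeq N (N - 1 - (n+1))))^2 = aSeq N (N - 1 - (n+1)) :=
      Real.sq_sqrt hay0
    have hmain := step_main ((j:ℝ)) (tAux N n) (Real.sqrt (aSeq N j))
      (Real.sqrt (aSeq N (N - 1 - (n+1))))
      (by linarith) hx2 hxi (Real.sqrt_nonneg _)
      (by rw [hysq, hxsq]; exact hstep)
      ih1
      (by rw [hjcast]; linarith [ih2])
    obtain ⟨hlow, hup⟩ := hmain
    have hform : tAux N (n+1) =
        (((⌊tAux N n⌋ : ℤ) : ℝ)^2*(((⌊tAux N n⌋ : ℤ) : ℝ)+1) +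
          2*(((j:ℝ))^2 - ((⌊tAux N n⌋ : ℤ) : ℝ)^2)*(tAux N n))/(2*((j:ℝ))*(((j:ℝ))+1)) := by
      rw [tAux_succ, hjcast]
    constructor
    · rw [hform, hj1cast]
      exact hlow
    · rw [hform]
      push_cast
      linarith [hup, hjcast]

/-- Eventually `t_{⌈√N + 1⌉}^{(N)} > 1`; consequently every index `i ≤ N−1` with
`t_i^{(N)} < 1` — in particular the greatest such index — is strictly less than `√N + 1`. -/
theorem icrit_upper_bound :
    ∃ N₀ : ℕ, ∀ N : ℕ, N₀ ≤ N →
      tgame N ⌈Real.sqrt N + 1⌉₊ > 1 ∧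
      ∀ i : ℕ, i ≤ N - 1 → tgame N i < 1 → (i : ℝ) < Real.sqrt N + 1 := by
  refine ⟨1000, fun N hN => ?_⟩
  have hN' : (1000:ℝ) ≤ (N:ℝ) := by exact_mod_cast hN
  have hr0 : 0 ≤ Real.sqrt N := Real.sqrt_nonneg _
  have hr2 : (Real.sqrt N)^2 = (N:ℝ) := Real.sq_sqrt (by positivity)
  have hr31 : (31:ℝ) ≤ Real.sqrt N := by
    apply sq_le_aux (by norm_num) hr0
    rw [hr2]; nlinarith
  have hrN2 : Real.sqrt N ≤ (N:ℝ)/2 := by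
    apply sq_le_aux hr0 (by linarith)
    rw [hr2]; nlinarith
  have hceil_ub : (⌈Real.sqrt N + 1⌉₊ : ℝ) < Real.sqrt N + 2 := by
    have h := Nat.ceil_lt_add_one (by positivity : (0:ℝ) ≤ Real.sqrt N + 1)
    linarith
  have hceilN : ⌈Real.sqrt N + 1⌉₊ ≤ N - 1 := by
    have h2 : ((⌈Real.sqrt N + 1⌉₊ : ℕ) : ℝ) < ((N - 1 : ℕ) : ℝ) := by
      rw [Nat.cast_sub (by omega : 1 ≤ N)]; push_cast; linarith
    exact Nat.le_of_lt (by exact_mod_cast h2)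
  have hgen : ∀ j : ℕ, ⌈Real.sqrt N + 1⌉₊ ≤ j → j ≤ N - 1 → 1 < tgame N j := by
    intro j hj1 hj2
    have hn : N - 1 - j ≤ N - 1 - ⌈Real.sqrt N + 1⌉₊ := by omega
    obtain ⟨h1, _⟩ := invariant N hN (N - 1 - j) hn
    have hjj : N - 1 - (N - 1 - j) = j := by omega
    rw [hjj] at h1
    have hjreal : (j:ℝ) ≤ (N:ℝ) - 1 := by
      have h : ((j:ℕ):ℝ) ≤ ((N-1:ℕ):ℝ) := by exact_mod_cast hj2
      rw [Nat.cast_sub (by omega : 1 ≤ N)] at h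
      push_cast at h
      linarith
    have hj1real : Real.sqrt N + 1 ≤ (j:ℝ) :=
      le_trans (Nat.le_ceil _) (by exact_mod_cast hj1)
    have hlt := aSeq_lt_sq N hN j hj1real hjreal
    have ha4 := aSeq_ge4 N j hjreal
    have hxpos : (0:ℝ) < Real.sqrt (aSeq N j) := Real.sqrt_pos.mpr (by linarith)
    have hxi : Real.sqrt (aSeq N j) < (j:ℝ) := by
      have h := Real.sqrt_lt_sqrt (by linarith : (0:ℝ) ≤ aSeq N j) hlt
      rwa [Real.sqrt_sq (by positivity : (0:ℝ) ≤ (j:ℝ))] at h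
    have hone : 1 < (j:ℝ)/Real.sqrt (aSeq N j) := (one_lt_div hxpos).mpr hxi
    have htg : tgame N j = tAux N (N-1-j) := rfl
    rw [htg]
    linarith
  constructor
  · exact hgen _ le_rfl hceilN
  · intro i hi hlt
    by_contra hc
    push_neg at hc
    have hle : ⌈Real.sqrt N + 1⌉₊ ≤ i := Nat.ceil_le.mpr hc
    have := hgen i hle hi
    linarith
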